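/- arXiv:2403.02324 — 2 statements merged into one kernel-verified Lean document; each statement's English description precedes it below -/
import Mathlib

section
/- For a > 0 and x > 0 define I_a(x) := ((x/2)^a / (√π · Γ(a + 1/2))) · ∫_{−1}^{1} e^{x·t}·(1 − t²)^{a − 1/2} dt, where Γ is the Gamma function (this is the modified Bessel function of the first kind of order a). Then for all a > 0 and all 0 < x < y, the strict inequalities e^{x−y}·(x/y)^a < I_a(x)/I_a(y) < e^{y−x}·(x/y)^a hold. -/
/-- The modified Bessel function of the first kind of real order `a > 0`,
given by the Poisson integral representation. -/
noncomputable def besselI (a x : ℝ) : ℝ :=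
  ((x / 2) ^ a / (Real.sqrt Real.pi * Real.Gamma (a + 1 / 2))) *
    ∫ t in (-1 : ℝ)..1, Real.exp (x * t) * (1 - t ^ 2) ^ (a - 1 / 2)

open MeasureTheory Set intervalIntegral

private lemma besselI_aux_right {c : ℝ} (hc : (-1:ℝ) < c) :
    IntervalIntegrable (fun t : ℝ => (1 - t ^ 2) ^ c) volume 0 1 := by
  rw [intervalIntegrable_iff, uIoc_of_le zero_le_one, integrableOn_Ioc_iff_integrableOn_Ioo]
  have h1 : IntervalIntegrable (fun t : ℝ => (1 - t) ^ c) volume 0 1 := by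
    have := ((intervalIntegrable_rpow' (a := 0) (b := 1) hc).comp_sub_left 1).symm
    norm_num at this
    exact this
  have hdom : IntegrableOn (fun t : ℝ => max 1 (2 ^ c) * (1 - t) ^ c) (Ioo 0 1) volume := by
    have h2 := intervalIntegrable_iff.mp (h1.const_mul (max 1 ((2:ℝ) ^ c)))
    rw [uIoc_of_le zero_le_one] at h2
    exact h2.mono_set Ioo_subset_Ioc_self
  refine hdom.mono' ?_ ?_
  · refine (ContinuousOn.rpow_const ?_ fun t ht => Or.inl ?_).aestronglyMeasurable
      measurableSet_Ioo
    · fun_prop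
    · have := ht.1; have := ht.2
      nlinarith [ht.1, ht.2]
  · rw [ae_restrict_iff' measurableSet_Ioo]
    filter_upwards with t ht
    have h0 : (0:ℝ) < 1 - t := by linarith [ht.2]
    have h1t : (0:ℝ) < 1 + t := by linarith [ht.1]
    have heq : (1 - t ^ 2 : ℝ) = (1 - t) * (1 + t) := by ring
    have hle : (1 + t) ^ c ≤ max 1 ((2:ℝ) ^ c) := by
      rcases le_or_gt 0 c with h | h
      · exact le_max_of_le_right (Real.rpow_le_rpow h1t.le (by linarith [ht.2]) h)
      · exact le_max_of_le_left (Real.rpow_le_one_of_one_le_of_nonpos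
          (by linarith [ht.1]) h.le)
    rw [Real.norm_eq_abs, abs_of_nonneg (Real.rpow_nonneg (by nlinarith) _), heq,
      Real.mul_rpow h0.le h1t.le, mul_comm (max 1 ((2:ℝ) ^ c)) _]
    exact mul_le_mul_of_nonneg_left hle (Real.rpow_nonneg h0.le _)

private lemma besselI_aux_int {c : ℝ} (hc : (-1:ℝ) < c) :
    IntervalIntegrable (fun t : ℝ => (1 - t ^ 2) ^ c) volume (-1) 1 := by
  have hright := besselI_aux_right hc
  have heven : (fun t : ℝ => (1 - (-t) ^ 2) ^ c) = fun t : ℝ => (1 - t ^ 2) ^ c := by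
    funext t; rw [neg_pow]; norm_num
  have hleft : IntervalIntegrable (fun t : ℝ => (1 - t ^ 2) ^ c) volume (-1) 0 := by
    rw [IntervalIntegrable.iff_comp_neg]
    norm_num
    exact hright.symm
  exact hleft.trans hright

theorem bessel_ratio_bounds (a x y : ℝ) (ha : 0 < a) (hx : 0 < x) (hxy : x < y) :
    Real.exp (x - y) * (x / y) ^ a < besselI a x / besselI a y ∧
    besselI a x / besselI a y < Real.exp (y - x) * (x / y) ^ a := by
  have hy : 0 < y := hx.trans hxy
  have hc : (-1:ℝ) < a - 1/2 := by linarith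
  have hg := besselI_aux_int hc
  have hint : ∀ b : ℝ, IntervalIntegrable
      (fun t => Real.exp (b * t) * (1 - t ^ 2) ^ (a - 1/2)) volume (-1) 1 :=
    fun b => hg.continuousOn_mul (Continuous.continuousOn (by fun_prop))
  set J : ℝ → ℝ := fun b => ∫ t in (-1:ℝ)..1, Real.exp (b * t) * (1 - t ^ 2) ^ (a - 1/2)
    with hJ
  have hJpos : ∀ b : ℝ, 0 < J b := by
    intro b
    refine intervalIntegral_pos_of_pos_on (hint b) (fun t ht => ?_) (by norm_num)
    exact mul_pos (Real.exp_pos _) (Real.rpow_pos_of_pos (by nlinarith [ht.1, ht.2]) _)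
  have key1 : Real.exp (x - y) * J y < J x := by
    have h1 : Real.exp (x - y) * J y
        = ∫ t in (-1:ℝ)..1, Real.exp (x - y) * (Real.exp (y * t) * (1 - t ^ 2) ^ (a - 1/2)) :=
      (intervalIntegral.integral_const_mul _ _).symm
    rw [h1, ← sub_pos, ← intervalIntegral.integral_sub (hint x) ((hint y).const_mul _)]
    refine intervalIntegral_pos_of_pos_on
      ((hint x).sub ((hint y).const_mul _)) (fun t ht => ?_) (by norm_num)
    have hgpos : 0 < ((1:ℝ) - t ^ 2) ^ (a - 1/2) :=
      Real.rpow_pos_of_pos (by nlinarith [ht.1, ht.2]) _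
    rw [← mul_assoc, ← Real.exp_add]
    have hexp : Real.exp (x - y + y * t) < Real.exp (x * t) := by
      apply Real.exp_lt_exp.mpr
      nlinarith [mul_pos (sub_pos.mpr hxy) (sub_pos.mpr ht.2)]
    nlinarith [mul_pos (sub_pos.mpr hexp) hgpos]
  have key2 : J x < Real.exp (y - x) * J y := by
    have h1 : Real.exp (y - x) * J y
        = ∫ t in (-1:ℝ)..1, Real.exp (y - x) * (Real.exp (y * t) * (1 - t ^ 2) ^ (a - 1/2)) :=
      (intervalIntegral.integral_const_mul _ _).symm
    rw [h1, ← sub_pos, ← intervalIntegral.integral_sub ((hint y).const_mul _) (hint x)]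
    refine intervalIntegral_pos_of_pos_on
      (((hint y).const_mul _).sub (hint x)) (fun t ht => ?_) (by norm_num)
    have hgpos : 0 < ((1:ℝ) - t ^ 2) ^ (a - 1/2) :=
      Real.rpow_pos_of_pos (by nlinarith [ht.1, ht.2]) _
    rw [← mul_assoc, ← Real.exp_add]
    have hexp : Real.exp (x * t) < Real.exp (y - x + y * t) := by
      apply Real.exp_lt_exp.mpr
      nlinarith [mul_pos (sub_pos.mpr hxy) (by linarith [ht.1] : (0:ℝ) < 1 + t)]
    nlinarith [mul_pos (sub_pos.mpr hexp) hgpos]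
  have hK : 0 < Real.sqrt Real.pi * Real.Gamma (a + 1/2) :=
    mul_pos (Real.sqrt_pos.mpr Real.pi_pos) (Real.Gamma_pos_of_pos (by linarith))
  have hB : ∀ b : ℝ, besselI a b
      = (b / 2) ^ a / (Real.sqrt Real.pi * Real.Gamma (a + 1/2)) * J b := fun b => by
    rw [besselI, hJ]
  have hxr : (0:ℝ) < (x / 2) ^ a := Real.rpow_pos_of_pos (by linarith) _
  have hyr : (0:ℝ) < (y / 2) ^ a := Real.rpow_pos_of_pos (by linarith) _
  have hpow : (0:ℝ) < (x / y) ^ a := Real.rpow_pos_of_pos (by positivity) _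
  have hAB : (x / 2) ^ a / (y / 2) ^ a = (x / y) ^ a := by
    rw [← Real.div_rpow (by linarith) (by linarith)]
    congr 1
    field_simp
  have hratio : besselI a x / besselI a y = (x / y) ^ a * (J x / J y) := by
    rw [hB x, hB y, ← hAB]
    field_simp
  constructor
  · rw [hratio, mul_comm (Real.exp (x - y)) _]
    exact mul_lt_mul_of_pos_left ((lt_div_iff₀ (hJpos y)).mpr key1) hpow
  · rw [hratio, mul_comm (Real.exp (y - x)) _]
    exact mul_lt_mul_of_pos_left ((div_lt_iff₀ (hJpos y)).mpr key2) hpow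
end

section
/- Let C₀ be an invertible symmetric real n×n matrix, let Δ, h ∈ ℝⁿ, set C₁ := Δ·hᵀ·C₀⁻¹ and c₀ := 1 + hᵀC₀⁻¹Δ, and assume c₀ ≠ 0. Define C₃ := −(C₀⁻¹C₁)/c₀ − (C₁ᵀC₀⁻¹)/c₀ + (C₁ᵀC₀⁻¹C₁)/c₀². Then the matrix (C₀ + Δhᵀ)ᵀ is invertible and ((C₀ + Δhᵀ)⁻¹)ᵀ · C₀ · (C₀ + Δhᵀ)⁻¹ = C₀⁻¹ + C₃. -/
open Matrix

lemma my_vecMulVec_mul {n : ℕ} (a b : Fin n → ℝ) (M : Matrix (Fin n) (Fin n) ℝ) :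
    vecMulVec a b * M = vecMulVec a (b ᵥ* M) := by
  ext i j
  simp [mul_apply, vecMulVec_apply, vecMul, dotProduct, Finset.mul_sum, mul_assoc]

lemma my_vecMulVec_mul_vecMulVec {n : ℕ} (a b c d : Fin n → ℝ) :
    vecMulVec a b * vecMulVec c d = (b ⬝ᵥ c) • vecMulVec a d := by
  ext i j
  simp [mul_apply, vecMulVec_apply, dotProduct, Finset.sum_mul, Finset.mul_sum]
  congr 1; ext k; ring

theorem perturbed_inverse_gram_correction (n : ℕ) (C₀ : Matrix (Fin n) (Fin n) ℝ)
    (hC₀ : IsUnit C₀) (hsym : C₀ᵀ = C₀) (Δ h : Fin n → ℝ)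
    (hc₀ : (1 : ℝ) + h ⬝ᵥ (C₀⁻¹ *ᵥ Δ) ≠ 0) :
    IsUnit (C₀ + vecMulVec Δ h)ᵀ ∧
    ((C₀ + vecMulVec Δ h)⁻¹)ᵀ * C₀ * (C₀ + vecMulVec Δ h)⁻¹
      = C₀⁻¹ +
        (-(((1 : ℝ) + h ⬝ᵥ (C₀⁻¹ *ᵥ Δ))⁻¹ • (C₀⁻¹ * (vecMulVec Δ h * C₀⁻¹)))
          - ((1 : ℝ) + h ⬝ᵥ (C₀⁻¹ *ᵥ Δ))⁻¹ • ((vecMulVec Δ h * C₀⁻¹)ᵀ * C₀⁻¹)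
          + ((((1 : ℝ) + h ⬝ᵥ (C₀⁻¹ *ᵥ Δ)) ^ 2)⁻¹ •
              ((vecMulVec Δ h * C₀⁻¹)ᵀ * C₀⁻¹ * (vecMulVec Δ h * C₀⁻¹)))) := by
  have hdet : IsUnit C₀.det := (Matrix.isUnit_iff_isUnit_det C₀).mp hC₀
  set c : ℝ := (1 : ℝ) + h ⬝ᵥ (C₀⁻¹ *ᵥ Δ) with hc
  set V : Matrix (Fin n) (Fin n) ℝ := vecMulVec Δ h with hV
  set B : Matrix (Fin n) (Fin n) ℝ := C₀⁻¹ - c⁻¹ • (C₀⁻¹ * V * C₀⁻¹) with hB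
  have hCC : C₀ * C₀⁻¹ = 1 := Matrix.mul_nonsing_inv C₀ hdet
  have hCC' : C₀⁻¹ * C₀ = 1 := Matrix.nonsing_inv_mul C₀ hdet
  have hVCV : V * C₀⁻¹ * V = (c - 1) • V := by
    rw [hV, my_vecMulVec_mul, my_vecMulVec_mul_vecMulVec]
    congr 1
    rw [← Matrix.dotProduct_mulVec]
    rw [hc]; ring
  have hcancel1 : ∀ X : Matrix (Fin n) (Fin n) ℝ, C₀⁻¹ * (C₀ * X) = X := fun X => by
    rw [← Matrix.mul_assoc, hCC', Matrix.one_mul]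
  have hcancel2 : ∀ X : Matrix (Fin n) (Fin n) ℝ, C₀ * (C₀⁻¹ * X) = X := fun X => by
    rw [← Matrix.mul_assoc, hCC, Matrix.one_mul]
  have hVCV' : ∀ X : Matrix (Fin n) (Fin n) ℝ, V * (C₀⁻¹ * (V * X)) = (c - 1) • (V * X) :=
    fun X => by
      rw [← Matrix.mul_assoc, ← Matrix.mul_assoc, Matrix.mul_assoc V C₀⁻¹ V, ← Matrix.mul_assoc,
        hVCV, Matrix.smul_mul]
  have hAB : (C₀ + V) * B = 1 := by
    rw [hB]
    simp only [Matrix.mul_sub, Matrix.add_mul, Matrix.mul_smul, Matrix.mul_assoc, hCC,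
      hcancel2, hVCV', hCC', Matrix.mul_one, smul_smul]
    have hcc : c⁻¹ * (c - 1) = 1 - c⁻¹ := by field_simp
    rw [smul_add, smul_smul, hcc, sub_smul, one_smul]
    abel
  have hdetA : IsUnit (C₀ + V).det := Matrix.isUnit_det_of_right_inverse hAB
  have hAinv : (C₀ + V)⁻¹ = B := Matrix.inv_eq_right_inv hAB
  have hunit : IsUnit (C₀ + V)ᵀ := by
    rw [Matrix.isUnit_iff_isUnit_det, Matrix.det_transpose]
    exact hdetA
  refine ⟨hunit, ?_⟩
  have hinvT : (C₀⁻¹)ᵀ = C₀⁻¹ := by rw [Matrix.transpose_nonsing_inv, hsym]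
  rw [hAinv, hB]
  rw [Matrix.transpose_sub, Matrix.transpose_smul, Matrix.transpose_mul, Matrix.transpose_mul,
    hinvT]
  rw [sq, mul_inv]
  simp only [Matrix.sub_mul, Matrix.mul_sub, Matrix.smul_mul, Matrix.mul_smul, Matrix.mul_assoc,
    hcancel1, hCC', Matrix.mul_one, Matrix.one_mul, smul_smul, Matrix.transpose_mul, hinvT]
  module
end
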